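/- arXiv:2310.02020 — 2 statements merged into one kernel-verified Lean document; each statement's English description precedes it below -/
import Mathlib

section
/- Let S be a semigroup and F an idempotent filter on S. A subset A ⊆ S is F-syndetic if and only if for every minimal left ideal L of F̄, L ∩ cl(A) ≠ ∅. -/
attribute [local instance] Ultrafilter.mul Ultrafilter.semigroup
  Ultrafilter.add Ultrafilter.addSemigroup

/-- The closure of `A ⊆ S` in `βS`: the set of ultrafilters containing `A`. -/
def ucl {S : Type} (A : Set S) : Set (Ultrafilter S) := {p | A ∈ p}

/-- The closed subset `F̄ = ⋂_{V ∈ F} cl V` of `βS` determined by a filter `F`. -/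
def Fbar {S : Type} (F : Filter S) : Set (Ultrafilter S) := {p | (↑p : Filter S) ≤ F}

/-- The dual (mesh) `F*` of a filter: sets meeting every member of `F`. -/
def FStar {S : Type} (F : Filter S) : Set (Set S) := {A | ∀ B ∈ F, (A ∩ B).Nonempty}

section Mul

variable {S : Type}

/-- `A` is thick: every finite set has a right translate inside `A`. -/
def IsThick [Mul S] (A : Set S) : Prop :=
  ∀ G : Finset S, ∃ x : S, ∀ t ∈ G, t * x ∈ A

/-- `A` is syndetic: finitely many translates of `A` cover `S`. -/
def IsSyndetic [Mul S] (A : Set S) : Prop :=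
  ∃ G : Finset S, (⋃ t ∈ G, {y : S | t * y ∈ A}) = Set.univ

/-- `A` is `F`-thick. -/
def FThick [Mul S] (F : Filter S) (A : Set S) : Prop :=
  ∃ V ∈ F, ∀ H : Finset S, ↑H ⊆ V → (⋂ t ∈ H, {y : S | t * y ∈ A}) ∈ FStar F

/-- `A` is `F`-syndetic. -/
def FSyndetic [Mul S] (F : Filter S) (A : Set S) : Prop :=
  ∀ V ∈ F, ∃ H : Finset S, ↑H ⊆ V ∧ (⋃ t ∈ H, {y : S | t * y ∈ A}) ∈ F

/-- `F` is an idempotent filter: `F ⊆ F · F`. -/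
def IdemFilter [Mul S] (F : Filter S) : Prop :=
  ∀ A ∈ F, {x : S | {y : S | x * y ∈ A} ∈ F} ∈ F

/-- `L` is a left ideal of the subsemigroup `T` of `βS`. -/
def IsLeftIdealIn [Semigroup S] (T L : Set (Ultrafilter S)) : Prop :=
  L.Nonempty ∧ L ⊆ T ∧ ∀ p ∈ T, ∀ q ∈ L, p * q ∈ L

/-- `L` is a minimal left ideal of the subsemigroup `T` of `βS`. -/
def IsMinLeftIdealIn [Semigroup S] (T L : Set (Ultrafilter S)) : Prop :=
  IsLeftIdealIn T L ∧ ∀ L', IsLeftIdealIn T L' → L' ⊆ L → L' = L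

/-- `R` is a right ideal of the subsemigroup `T` of `βS`. -/
def IsRightIdealIn [Semigroup S] (T R : Set (Ultrafilter S)) : Prop :=
  R.Nonempty ∧ R ⊆ T ∧ ∀ q ∈ T, ∀ p ∈ R, p * q ∈ R

/-- `R` is a minimal right ideal of the subsemigroup `T` of `βS`. -/
def IsMinRightIdealIn [Semigroup S] (T R : Set (Ultrafilter S)) : Prop :=
  IsRightIdealIn T R ∧ ∀ R', IsRightIdealIn T R' → R' ⊆ R → R' = R

/-- `I` is a two-sided ideal of the subsemigroup `T` of `βS`. -/
def IsIdealIn [Semigroup S] (T I : Set (Ultrafilter S)) : Prop :=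
  I.Nonempty ∧ I ⊆ T ∧ ∀ p ∈ T, ∀ q ∈ I, p * q ∈ I ∧ q * p ∈ I

/-- The smallest two-sided ideal `K(T)` of `T`. -/
def smallestIdealIn [Semigroup S] (T : Set (Ultrafilter S)) : Set (Ultrafilter S) :=
  ⋂₀ {I | IsIdealIn T I}

/-- `A` is strongly `F`-central. -/
def StronglyFCentral [Semigroup S] (F : Filter S) (A : Set S) : Prop :=
  ∀ L, IsMinLeftIdealIn (Fbar F) L → ∃ p ∈ L, p * p = p ∧ p ∈ ucl A

/-- A family of sets has the `F`-thick finite intersection property. -/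
def FThickFIP [Mul S] (F : Filter S) (𝒜 : Set (Set S)) : Prop :=
  ∀ T : Finset (Set S), ↑T ⊆ 𝒜 → FThick F (⋂₀ (T : Set (Set S)))

/-- A family of sets has the finite intersection property. -/
def HasFIP (𝒜 : Set (Set S)) : Prop :=
  ∀ T : Finset (Set S), ↑T ⊆ 𝒜 → (⋂₀ (T : Set (Set S))).Nonempty

end Mul

section Add

variable {S : Type}

/-- Additive version of `IsThick`. -/
def AddIsThick [Add S] (A : Set S) : Prop :=
  ∀ G : Finset S, ∃ x : S, ∀ t ∈ G, t + x ∈ A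

/-- Additive version of `IsSyndetic`. -/
def AddIsSyndetic [Add S] (A : Set S) : Prop :=
  ∃ G : Finset S, (⋃ t ∈ G, {y : S | t + y ∈ A}) = Set.univ

/-- Additive version of `FThick`. -/
def AddFThick [Add S] (F : Filter S) (A : Set S) : Prop :=
  ∃ V ∈ F, ∀ H : Finset S, ↑H ⊆ V → (⋂ t ∈ H, {y : S | t + y ∈ A}) ∈ FStar F

/-- Additive version of `FSyndetic`. -/
def AddFSyndetic [Add S] (F : Filter S) (A : Set S) : Prop :=
  ∀ V ∈ F, ∃ H : Finset S, ↑H ⊆ V ∧ (⋃ t ∈ H, {y : S | t + y ∈ A}) ∈ F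

/-- Additive version of `IsLeftIdealIn`. -/
def AddIsLeftIdealIn [AddSemigroup S] (T L : Set (Ultrafilter S)) : Prop :=
  L.Nonempty ∧ L ⊆ T ∧ ∀ p ∈ T, ∀ q ∈ L, p + q ∈ L

/-- Additive version of `IsMinLeftIdealIn`. -/
def AddIsMinLeftIdealIn [AddSemigroup S] (T L : Set (Ultrafilter S)) : Prop :=
  AddIsLeftIdealIn T L ∧ ∀ L', AddIsLeftIdealIn T L' → L' ⊆ L → L' = L

/-- Additive version of `IsRightIdealIn`. -/
def AddIsRightIdealIn [AddSemigroup S] (T R : Set (Ultrafilter S)) : Prop :=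
  R.Nonempty ∧ R ⊆ T ∧ ∀ q ∈ T, ∀ p ∈ R, p + q ∈ R

/-- Additive version of `IsMinRightIdealIn`. -/
def AddIsMinRightIdealIn [AddSemigroup S] (T R : Set (Ultrafilter S)) : Prop :=
  AddIsRightIdealIn T R ∧ ∀ R', AddIsRightIdealIn T R' → R' ⊆ R → R' = R

/-- Additive version of `IsIdealIn`. -/
def AddIsIdealIn [AddSemigroup S] (T I : Set (Ultrafilter S)) : Prop :=
  I.Nonempty ∧ I ⊆ T ∧ ∀ p ∈ T, ∀ q ∈ I, p + q ∈ I ∧ q + p ∈ I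

/-- Additive version of `smallestIdealIn`. -/
def addSmallestIdealIn [AddSemigroup S] (T : Set (Ultrafilter S)) : Set (Ultrafilter S) :=
  ⋂₀ {I | AddIsIdealIn T I}

/-- Additive version of `StronglyFCentral`. -/
def AddStronglyFCentral [AddSemigroup S] (F : Filter S) (A : Set S) : Prop :=
  ∀ L, AddIsMinLeftIdealIn (Fbar F) L → ∃ p ∈ L, p + p = p ∧ p ∈ ucl A

/-- Additive version of `FThickFIP`. -/
def AddFThickFIP [Add S] (F : Filter S) (𝒜 : Set (Set S)) : Prop :=
  ∀ T : Finset (Set S), ↑T ⊆ 𝒜 → AddFThick F (⋂₀ (T : Set (Set S)))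

end Add

section Stmt7Aux

open Filter

variable {S : Type} [Semigroup S]

lemma mem_umul {p q : Ultrafilter S} {A : Set S} :
    A ∈ p * q ↔ {x : S | {y : S | x * y ∈ A} ∈ q} ∈ p := Iff.rfl

lemma Fbar_isClosed (F : Filter S) : IsClosed (Fbar F) := by
  have h : Fbar F = ⋂ V ∈ F, {p : Ultrafilter S | V ∈ p} := by
    ext p
    simp only [Fbar, Set.mem_setOf_eq, Filter.le_def, Set.mem_iInter]
    rfl
  rw [h]
  exact isClosed_biInter fun V _ => ultrafilter_isClosed_basic V

lemma Fbar_mul_mem {F : Filter S} (hidem : IdemFilter F) {p q : Ultrafilter S}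
    (hp : p ∈ Fbar F) (hq : q ∈ Fbar F) : p * q ∈ Fbar F := by
  intro V hV
  have h2 : {x : S | {y : S | x * y ∈ V} ∈ F} ∈ p := hp (hidem V hV)
  have h3 : {x : S | {y : S | x * y ∈ V} ∈ q} ∈ p := by
    filter_upwards [h2] with x hx using hq hx
  exact mem_umul.mpr h3

lemma exists_ultrafilter_compl {F : Filter S} [F.NeBot] {B : Set S} (hB : B ∉ F) :
    ∃ p : Ultrafilter S, (↑p : Filter S) ≤ F ∧ Bᶜ ∈ p := by
  have hne : (F ⊓ 𝓟 Bᶜ).NeBot := by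
    rw [inf_principal_neBot_iff]
    intro U hU
    rcases Set.not_subset.mp (fun hsub => hB (mem_of_superset hU hsub)) with ⟨x, hx1, hx2⟩
    exact ⟨x, hx1, hx2⟩
  obtain ⟨p, hp⟩ := Ultrafilter.exists_le (F ⊓ 𝓟 Bᶜ)
  exact ⟨p, hp.trans inf_le_left, hp (mem_inf_of_right (mem_principal_self _))⟩

lemma mem_of_forall_ultrafilter {F : Filter S} [F.NeBot] {B : Set S}
    (h : ∀ p : Ultrafilter S, (↑p : Filter S) ≤ F → B ∈ p) : B ∈ F := by
  by_contra hB
  obtain ⟨p, hpF, hpB⟩ := exists_ultrafilter_compl hB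
  exact (Ultrafilter.compl_notMem_iff.mpr (h p hpF)) hpB

lemma exists_min_left_ideal {F : Filter S} [F.NeBot] (hidem : IdemFilter F)
    (L0 : Set (Ultrafilter S)) (hL0 : IsLeftIdealIn (Fbar F) L0) (hL0c : IsClosed L0) :
    ∃ L, IsMinLeftIdealIn (Fbar F) L ∧ L ⊆ L0 := by
  set C := {L : Set (Ultrafilter S) | IsLeftIdealIn (Fbar F) L ∧ IsClosed L} with hC
  have hzorn : ∀ c ⊆ C, IsChain (· ⊆ ·) c → c.Nonempty → ∃ lb ∈ C, ∀ s ∈ c, lb ⊆ s := by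
    intro c hcC hchain hcne
    refine ⟨⋂₀ c, ⟨⟨?_, ?_, ?_⟩, ?_⟩, fun s hs => Set.sInter_subset_of_mem hs⟩
    · have : Nonempty c := hcne.to_subtype
      apply IsCompact.nonempty_sInter_of_directed_nonempty_isCompact_isClosed
      · intro U hU V hV
        rcases hchain.total hU hV with h | h
        exacts [⟨U, hU, Set.Subset.rfl, h⟩, ⟨V, hV, h, Set.Subset.rfl⟩]
      · exact fun U hU => (hcC hU).1.1
      · exact fun U hU => ((hcC hU).2).isCompact
      · exact fun U hU => (hcC hU).2
    · obtain ⟨L1, hL1⟩ := hcne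
      exact (Set.sInter_subset_of_mem hL1).trans (hcC hL1).1.2.1
    · intro p hp q hq
      intro L1 hL1
      exact (hcC hL1).1.2.2 p hp q (hq L1 hL1)
    · exact isClosed_sInter fun U hU => (hcC hU).2
  obtain ⟨m, hmL0, hmmin⟩ := zorn_superset_nonempty C hzorn L0 ⟨hL0, hL0c⟩
  have hmC := hmmin.1
  refine ⟨m, ⟨hmC.1, ?_⟩, hmL0⟩
  intro L' hL' hL'm
  obtain ⟨q', hq'⟩ := hL'.1
  set L'' : Set (Ultrafilter S) := (· * q') '' Fbar F with hL''def
  have hq'F : q' ∈ Fbar F := hL'.2.1 hq'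
  have hL''L' : L'' ⊆ L' := by
    rintro _ ⟨p, hp, rfl⟩
    exact hL'.2.2 p hp q' hq'
  have hL''C : L'' ∈ C := by
    refine ⟨⟨?_, ?_, ?_⟩, ?_⟩
    · obtain ⟨p, hp⟩ := Ultrafilter.exists_le F
      exact ⟨p * q', ⟨p, hp, rfl⟩⟩
    · rintro _ ⟨p, hp, rfl⟩
      exact Fbar_mul_mem hidem hp hq'F
    · rintro r hr _ ⟨p, hp, rfl⟩
      refine ⟨r * p, Fbar_mul_mem hidem hr hp, ?_⟩
      show (r * p) * q' = r * (p * q')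
      exact mul_assoc r p q'
    · exact (((Fbar_isClosed F).isCompact).image
        (Ultrafilter.continuous_mul_left q')).isClosed
  have heq : L'' = m :=
    subset_antisymm (hL''L'.trans hL'm) (hmmin.2 hL''C (hL''L'.trans hL'm))
  exact subset_antisymm hL'm (heq ▸ hL''L')
end Stmt7Aux

/-- For an idempotent filter `F`, `A` is `F`-syndetic iff every minimal
left ideal of `F̄` meets `cl A`. -/

theorem stmt7 {S : Type} [Semigroup S] (F : Filter S) [F.NeBot]
    (hidem : IdemFilter F) (A : Set S) :
    FSyndetic F A ↔ ∀ L, IsMinLeftIdealIn (Fbar F) L → (L ∩ ucl A).Nonempty := by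
  constructor
  · intro hsyn L hL
    by_contra hdisj
    have hc : ∀ p ∈ L, Aᶜ ∈ p := fun p hp =>
      Ultrafilter.compl_mem_iff_notMem.mpr fun hA => hdisj ⟨p, hp, hA⟩
    obtain ⟨q, hq⟩ := hL.1.1
    have hqF : q ∈ Fbar F := hL.1.2.1 hq
    have hW : {x : S | {y : S | x * y ∈ Aᶜ} ∈ q} ∈ F := by
      apply mem_of_forall_ultrafilter
      intro p hp
      exact mem_umul.mp (hc _ (hL.1.2.2 p hp q hq))
    obtain ⟨H, hHW, hHU⟩ := hsyn _ hW
    have hUq : (⋃ t ∈ H, {y : S | t * y ∈ A}) ∈ q := hqF hHU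
    rw [← Finset.set_biUnion_coe, Ultrafilter.finite_biUnion_mem_iff H.finite_toSet] at hUq
    obtain ⟨t, htH, htq⟩ := hUq
    have h2 : {y : S | t * y ∈ Aᶜ} ∈ q := hHW htH
    obtain ⟨y, hy1, hy2⟩ := Filter.nonempty_of_mem (Filter.inter_mem htq h2)
    exact hy2 hy1
  · intro h
    classical
    by_contra hns
    rw [FSyndetic] at hns
    push_neg at hns
    obtain ⟨V, hV, hVbad⟩ := hns
    have key : ∀ H : Finset S, ↑H ⊆ V →
        ∃ p : Ultrafilter S, (↑p : Filter S) ≤ F ∧ ∀ t ∈ H, {y : S | t * y ∈ Aᶜ} ∈ p := by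
      intro H hH
      obtain ⟨p, hpF, hpB⟩ := exists_ultrafilter_compl (hVbad H hH)
      refine ⟨p, hpF, fun t ht => Filter.mem_of_superset hpB ?_⟩
      intro y hy
      simp only [Set.mem_compl_iff, Set.mem_iUnion] at hy
      exact fun hmem => hy ⟨t, ht, hmem⟩
    have hq : ∃ q : Ultrafilter S,
        q ∈ Fbar F ∩ ⋂ t : V, {p : Ultrafilter S | {y : S | (t : S) * y ∈ Aᶜ} ∈ p} := by
      apply ((Fbar_isClosed F).isCompact).inter_iInter_nonempty
      · exact fun t => ultrafilter_isClosed_basic _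
      · intro u
        obtain ⟨p, hpF, hp⟩ := key (u.image Subtype.val)
          (by intro t ht
              obtain ⟨s, _, rfl⟩ := Finset.mem_coe.mp ht |> Finset.mem_image.mp
              exact s.2)
        refine ⟨p, hpF, ?_⟩
        simp only [Set.mem_iInter]
        intro t ht
        exact hp t (Finset.mem_image_of_mem _ ht)
    obtain ⟨q, hqF, hqV⟩ := hq
    simp only [Set.mem_iInter, Set.mem_setOf_eq] at hqV
    set L0 : Set (Ultrafilter S) := (· * q) '' Fbar F with hL0def
    have hL0 : IsLeftIdealIn (Fbar F) L0 := by
      refine ⟨?_, ?_, ?_⟩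
      · obtain ⟨p, hp⟩ := Ultrafilter.exists_le F
        exact ⟨p * q, ⟨p, hp, rfl⟩⟩
      · rintro _ ⟨p, hp, rfl⟩
        exact Fbar_mul_mem hidem hp hqF
      · rintro r hr _ ⟨p, hp, rfl⟩
        refine ⟨r * p, Fbar_mul_mem hidem hr hp, ?_⟩
        show (r * p) * q = r * (p * q)
        exact mul_assoc r p q
    have hL0c : IsClosed L0 :=
      (((Fbar_isClosed F).isCompact).image (Ultrafilter.continuous_mul_left q)).isClosed
    obtain ⟨L, hLmin, hLL0⟩ := exists_min_left_ideal hidem L0 hL0 hL0c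
    obtain ⟨r, hrL, hrA⟩ := h L hLmin
    obtain ⟨p, hp, rfl⟩ := hLL0 hrL
    have : Aᶜ ∈ p * q := by
      rw [mem_umul]
      exact Filter.mem_of_superset (hp hV) fun t ht => hqV ⟨t, ht⟩
    have hrA' : A ∈ p * q := hrA
    exact (Ultrafilter.compl_notMem_iff.mpr hrA') this
end

section
/- Let S and T be discrete semigroups. If A is right thickly central in S and B is right thickly central in T, then A × B is right thickly central in S × T. -/
attribute [local instance] Ultrafilter.mul Ultrafilter.semigroup
  Ultrafilter.add Ultrafilter.addSemigroup

/-- `A` is right thickly central: some minimal left ideal of `βS` has all of its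
idempotents in `cl A`. -/
def ThicklyCentral {S : Type} [Semigroup S] (A : Set S) : Prop :=
  ∃ L, IsMinLeftIdealIn (Set.univ : Set (Ultrafilter S)) L ∧
    ∀ p ∈ L, p * p = p → p ∈ ucl A

section Proof16

open Filter Set

lemma mem_umul_s16 {M : Type} [Mul M] (U V : Ultrafilter M) (s : Set M) :
    s ∈ U * V ↔ {a | {b | a * b ∈ s} ∈ V} ∈ U := Iff.rfl

lemma continuous_umap {M N : Type} (f : M → N) : Continuous (Ultrafilter.map f) := by
  apply ultrafilterBasis_is_basis.continuous_iff.2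
  rintro _ ⟨s, rfl⟩
  exact ultrafilter_isOpen_basic (f ⁻¹' s)

lemma umap_mul {M N : Type} [Mul M] [Mul N] (f : M → N) (hf : ∀ a b, f (a * b) = f a * f b)
    (U V : Ultrafilter M) : (U * V).map f = U.map f * V.map f := by
  rw [← Ultrafilter.coe_inj]
  apply Filter.ext
  intro s
  change f ⁻¹' s ∈ U * V ↔ s ∈ U.map f * V.map f
  rw [mem_umul_s16, mem_umul_s16]
  simp only [Ultrafilter.mem_map]
  apply iff_of_eq; congr 1; ext a
  apply iff_of_eq; congr 1; ext b
  simp [hf]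

lemma range_mul_left_ideal {M : Type} [Semigroup M] (p : Ultrafilter M) :
    IsLeftIdealIn Set.univ (Set.range (· * p)) ∧ IsClosed (Set.range (· * p)) := by
  constructor
  · refine ⟨⟨p * p, p, rfl⟩, Set.subset_univ _, ?_⟩
    rintro q - r ⟨x, rfl⟩
    exact ⟨q * x, mul_assoc q x p⟩
  · exact (isCompact_range (Ultrafilter.continuous_mul_left p)).isClosed

lemma minLeftIdeal_closed {M : Type} [Semigroup M] {L : Set (Ultrafilter M)}
    (h : IsMinLeftIdealIn Set.univ L) : IsClosed L := by
  obtain ⟨⟨⟨p, hp⟩, -, hmul⟩, hmin⟩ := h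
  have h1 : Set.range (· * p) = L := by
    apply hmin _ (range_mul_left_ideal p).1
    rintro r ⟨x, rfl⟩; exact hmul x trivial p hp
  rw [← h1]
  exact (range_mul_left_ideal p).2

lemma exists_min_left_ideal_s16 {M : Type} [Semigroup M] {J : Set (Ultrafilter M)}
    (hJ : IsLeftIdealIn Set.univ J) (hJc : IsClosed J) :
    ∃ L ⊆ J, IsMinLeftIdealIn Set.univ L := by
  set 𝒞 : Set (Set (Ultrafilter M)) :=
    {L | L ⊆ J ∧ IsLeftIdealIn Set.univ L ∧ IsClosed L} with h𝒞
  have hch : ∀ c ⊆ 𝒞, IsChain (· ⊆ ·) c → c.Nonempty →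
      ∃ lb ∈ 𝒞, ∀ s ∈ c, lb ⊆ s := by
    intro c hc hchain hcne
    refine ⟨⋂₀ c, ⟨?_, ⟨?_, Set.subset_univ _, ?_⟩, ?_⟩, fun s hs => Set.sInter_subset_of_mem hs⟩
    · obtain ⟨L, hL⟩ := hcne
      exact (Set.sInter_subset_of_mem hL).trans (hc hL).1
    · haveI : Nonempty c := hcne.to_subtype
      apply IsCompact.nonempty_sInter_of_directed_nonempty_isCompact_isClosed
      · intro x hx y hy
        rcases hchain.total hx hy with h | h
        · exact ⟨x, hx, subset_rfl, h⟩
        · exact ⟨y, hy, h, subset_rfl⟩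
      · exact fun L hL => (hc hL).2.1.1
      · exact fun L hL => (hc hL).2.2.isCompact
      · exact fun L hL => (hc hL).2.2
    · rintro q - r hr
      exact Set.mem_sInter.2 fun L hL => (hc hL).2.1.2.2 q trivial r (hr L hL)
    · exact isClosed_sInter fun L hL => (hc hL).2.2
  obtain ⟨Lm, -, hLm, hmin⟩ := zorn_superset_nonempty 𝒞 hch J ⟨le_refl J, hJ, hJc⟩
  refine ⟨Lm, hLm.1, hLm.2.1, ?_⟩
  intro L' hL' hsub
  obtain ⟨p, hp⟩ := hL'.1
  have hr : Set.range (· * p) ⊆ L' := by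
    rintro r ⟨x, rfl⟩; exact hL'.2.2 x trivial p hp
  have hLm' : Lm ⊆ Set.range (· * p) :=
    hmin ⟨(hr.trans hsub).trans hLm.1, (range_mul_left_ideal p).1,
      (range_mul_left_ideal p).2⟩ (hr.trans hsub)
  exact le_antisymm hsub (hLm'.trans hr)

private theorem stmt16_aux {S T : Type} [Semigroup S] [Semigroup T] (A : Set S) (B : Set T)
    (hA : ∃ L, IsMinLeftIdealIn (Set.univ : Set (Ultrafilter S)) L ∧
      ∀ p ∈ L, p * p = p → p ∈ ucl A)
    (hB : ∃ L, IsMinLeftIdealIn (Set.univ : Set (Ultrafilter T)) L ∧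
      ∀ p ∈ L, p * p = p → p ∈ ucl B) :
    ∃ L, IsMinLeftIdealIn (Set.univ : Set (Ultrafilter (S × T))) L ∧
      ∀ p ∈ L, p * p = p → p ∈ ucl (A ×ˢ B) := by
  obtain ⟨LS, hLS, hLSidem⟩ := hA
  obtain ⟨LT, hLT, hLTidem⟩ := hB
  have hLSc : IsClosed LS := minLeftIdeal_closed hLS
  have hLTc : IsClosed LT := minLeftIdeal_closed hLT
  set J : Set (Ultrafilter (S × T)) :=
    {p | p.map Prod.fst ∈ LS ∧ p.map Prod.snd ∈ LT} with hJdef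
  have hJc : IsClosed J := IsClosed.inter
    (hLSc.preimage (continuous_umap _)) (hLTc.preimage (continuous_umap _))
  have hJne : J.Nonempty := by
    obtain ⟨q, hq⟩ := hLS.1.1
    obtain ⟨r, hr⟩ := hLT.1.1
    obtain ⟨p, hp⟩ := Ultrafilter.exists_le ((↑q : Filter S) ×ˢ (↑r : Filter T))
    have h1 : p.map Prod.fst = q := by
      apply Ultrafilter.coe_le_coe.mp
      rw [Ultrafilter.coe_map]
      calc Filter.map Prod.fst ↑p ≤ Filter.map Prod.fst ((↑q : Filter S) ×ˢ (↑r : Filter T)) :=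
            Filter.map_mono hp
        _ = ↑q := Filter.map_fst_prod _ _
    have h2 : p.map Prod.snd = r := by
      apply Ultrafilter.coe_le_coe.mp
      rw [Ultrafilter.coe_map]
      calc Filter.map Prod.snd ↑p ≤ Filter.map Prod.snd ((↑q : Filter S) ×ˢ (↑r : Filter T)) :=
            Filter.map_mono hp
        _ = ↑r := Filter.map_snd_prod _ _
    exact ⟨p, h1 ▸ hq, h2 ▸ hr⟩
  have hJideal : IsLeftIdealIn Set.univ J := by
    refine ⟨hJne, Set.subset_univ _, ?_⟩
    rintro s - p ⟨h1, h2⟩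
    constructor
    · rw [umap_mul Prod.fst (fun a b => rfl) s p]
      exact hLS.1.2.2 _ trivial _ h1
    · rw [umap_mul Prod.snd (fun a b => rfl) s p]
      exact hLT.1.2.2 _ trivial _ h2
  obtain ⟨L, hLJ, hLmin⟩ := exists_min_left_ideal_s16 hJideal hJc
  refine ⟨L, hLmin, ?_⟩
  intro p hp hidem
  have h1 : p.map Prod.fst * p.map Prod.fst = p.map Prod.fst := by
    rw [← umap_mul Prod.fst (fun a b => rfl) p p, hidem]
  have h2 : p.map Prod.snd * p.map Prod.snd = p.map Prod.snd := by
    rw [← umap_mul Prod.snd (fun a b => rfl) p p, hidem]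
  have hAmem : A ∈ p.map Prod.fst := hLSidem _ (hLJ hp).1 h1
  have hBmem : B ∈ p.map Prod.snd := hLTidem _ (hLJ hp).2 h2
  show A ×ˢ B ∈ p
  rw [Set.prod_eq]
  exact Filter.inter_mem hAmem hBmem

end Proof16

/-- The product of right thickly central sets is right thickly central. -/
theorem stmt16 {S T : Type} [Semigroup S] [Semigroup T] (A : Set S) (B : Set T)
    (hA : ThicklyCentral A) (hB : ThicklyCentral B) :
    ThicklyCentral (A ×ˢ B) :=
  stmt16_aux A B hA hB
end
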